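/- arXiv:math/0305356 — 8 statements merged into one kernel-verified Lean document; each statement's English description precedes it below -/
import Mathlib

section
/- Let K be a field, d a nonnegative integer, and θ_0, θ_1, ..., θ_d a sequence of scalars in K that is (β,γ)-recurrent, meaning θ_{i-1} - β·θ_i + θ_{i+1} = γ for 1 ≤ i ≤ d-1. Then there exists ϱ ∈ K such that θ_{i-1}² - β·θ_{i-1}·θ_i + θ_i² - γ·(θ_{i-1} + θ_i) = ϱ for all 1 ≤ i ≤ d. -/
theorem stmt_0 {K : Type*} [Field K] (d : ℕ) (β γ : K) (θ : ℕ → K)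
    (hrec : ∀ i : ℕ, 1 ≤ i → i + 1 ≤ d → θ (i - 1) - β * θ i + θ (i + 1) = γ) :
    ∃ ϱ : K, ∀ i : ℕ, 1 ≤ i → i ≤ d →
      θ (i - 1) ^ 2 - β * θ (i - 1) * θ i + θ i ^ 2 - γ * (θ (i - 1) + θ i) = ϱ := by
  refine ⟨θ 0 ^ 2 - β * θ 0 * θ 1 + θ 1 ^ 2 - γ * (θ 0 + θ 1), ?_⟩
  intro i hi hid
  induction i with
  | zero => omega
  | succ n ih =>
    rcases Nat.eq_or_lt_of_le hi with h1 | h1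
    · simp [← h1]
    · have hn1 : 1 ≤ n := by omega
      have hrec' := hrec n hn1 (by omega)
      have ihn := ih hn1 (by omega)
      simp only [Nat.add_sub_cancel] at *
      rw [← ihn]
      have hn : n - 1 + 1 = n := by omega
      have key : θ (n + 1) + θ (n - 1) - β * θ n - γ = 0 := by linear_combination hrec'
      linear_combination (θ (n + 1) - θ (n - 1)) * hrec'
end

section
/- Let K be a field, β, γ, ϱ ∈ K, and θ_0, ..., θ_d a sequence in K such that θ_{i-1}² - β·θ_{i-1}·θ_i + θ_i² - γ·(θ_{i-1} + θ_i) = ϱ for 1 ≤ i ≤ d, and suppose θ_{i-1} ≠ θ_{i+1} for 1 ≤ i ≤ d-1. Then the sequence is (β,γ)-recurrent: θ_{i-1} - β·θ_i + θ_{i+1} = γ for 1 ≤ i ≤ d-1. -/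
theorem stmt_1 {K : Type*} [Field K] (d : ℕ) (β γ ϱ : K) (θ : ℕ → K)
    (hform : ∀ i : ℕ, 1 ≤ i → i ≤ d →
      θ (i - 1) ^ 2 - β * θ (i - 1) * θ i + θ i ^ 2 - γ * (θ (i - 1) + θ i) = ϱ)
    (hne : ∀ i : ℕ, 1 ≤ i → i + 1 ≤ d → θ (i - 1) ≠ θ (i + 1)) :
    ∀ i : ℕ, 1 ≤ i → i + 1 ≤ d → θ (i - 1) - β * θ i + θ (i + 1) = γ := by
  intro i hi hid
  have h1 := hform i hi (le_trans (Nat.le_succ i) hid)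
  have h2 := hform (i + 1) (Nat.le_add_left 1 i) hid
  simp only [Nat.add_sub_cancel] at h2
  have hne' := hne i hi hid
  have hfac : (θ (i - 1) - θ (i + 1)) * (θ (i - 1) - β * θ i + θ (i + 1) - γ) = 0 := by
    have := sub_eq_zero_of_eq (h1.trans h2.symm)
    ring_nf at this ⊢
    linear_combination this
  rcases mul_eq_zero.mp hfac with h | h
  · exact absurd (sub_eq_zero.mp h) hne'
  · linear_combination h
end

section
/- Let V be a finite-dimensional nonzero vector space over a field K and (A, A*) a Leonard pair on V (i.e., there is a basis in which A is irreducible tridiagonal and A* is diagonal, and a basis in which A* is irreducible tridiagonal and A is diagonal). Then A is multiplicity-free: A has dim(V) distinct eigenvalues, all lying in K. -/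
/-- A square matrix is irreducible tridiagonal: nonzero entries lie within
distance one of the diagonal, and all sub- and superdiagonal entries are nonzero. -/
def IsIrreducibleTridiagonal {K : Type*} [Field K] {n : ℕ}
    (M : Matrix (Fin n) (Fin n) K) : Prop :=
  (∀ i j : Fin n, ((i : ℕ) + 1 < j ∨ (j : ℕ) + 1 < i) → M i j = 0) ∧
  (∀ i j : Fin n, ((i : ℕ) + 1 = j ∨ (j : ℕ) + 1 = i) → M i j ≠ 0)

/-- A Leonard pair: a pair of linear maps such that in some basis the first is
irreducible tridiagonal and the second diagonal, and in some basis the second is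
irreducible tridiagonal and the first diagonal. -/
def IsLeonardPair {K V : Type*} [Field K] [AddCommGroup V] [Module K V]
    (A B : Module.End K V) : Prop :=
  ∃ (n : ℕ) (b c : Module.Basis (Fin n) K V),
    IsIrreducibleTridiagonal (LinearMap.toMatrix b b A) ∧
    (LinearMap.toMatrix b b B).IsDiag ∧
    IsIrreducibleTridiagonal (LinearMap.toMatrix c c B) ∧
    (LinearMap.toMatrix c c A).IsDiag

/-!
Since `A` is diagonal in the basis `c`, its eigenvalues are the diagonal entries `θ i`, with
eigenvectors `c i`. In the basis `b`, `A` is irreducible tridiagonal, so row `k` of `A x = θ x`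
expresses `x (k+1)` through `x k` and `x (k-1)`: an eigenvector is determined by its first
coordinate, and every eigenspace of `A` has dimension at most one. Hence no two of the linearly
independent vectors `c i` share an eigenvalue, i.e. `θ` is injective.
-/

open scoped Matrix

section

variable {K V : Type*} [Field K] [AddCommGroup V] [Module K V]

namespace IsIrreducibleTridiagonal

variable {n : ℕ} {M : Matrix (Fin n) (Fin n) K}

theorem eq_zero_of_mulVec_eq_smul (hM : IsIrreducibleTridiagonal M) (hn : 0 < n)
    {θ : K} {x : Fin n → K} (hx : M *ᵥ x = θ • x) (h0 : x ⟨0, hn⟩ = 0) : x = 0 := by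
  suffices ∀ k (hk : k < n), ∀ j : Fin n, (j : ℕ) ≤ k → x j = 0 from
    funext fun j => this j j.isLt j le_rfl
  intro k
  induction k with
  | zero =>
    intro _ j hj
    rwa [show j = ⟨0, hn⟩ from Fin.ext (Nat.le_zero.mp hj)]
  | succ k ih =>
    intro hk j hj
    rcases Nat.lt_or_eq_of_le hj with hj | hj
    · exact ih (by omega) j (by omega)
    obtain rfl : j = ⟨k + 1, hk⟩ := Fin.ext hj
    have hrow : ∑ l, M ⟨k, by omega⟩ l * x l = θ * x ⟨k, by omega⟩ := congrFun hx _
    rw [Finset.sum_eq_single (⟨k + 1, hk⟩ : Fin n)] at hrow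
    · rw [ih (by omega) ⟨k, by omega⟩ le_rfl, mul_zero] at hrow
      exact (mul_eq_zero.mp hrow).resolve_left (hM.2 _ _ (Or.inl rfl))
    · intro l _ hl
      rcases Nat.lt_or_ge (l : ℕ) (k + 1) with hlt | hge
      · rw [ih (by omega) l (by omega), mul_zero]
      · have hl' : (l : ℕ) ≠ k + 1 := fun h => hl (Fin.ext h)
        rw [hM.1 _ _ (Or.inl (by simp only; omega)), zero_mul]
    · simp

end IsIrreducibleTridiagonal

theorem finrank_eigenspace_le_one_of_isIrreducibleTridiagonal {n : ℕ}
    (b : Module.Basis (Fin n) K V) {A : Module.End K V}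
    (hA : IsIrreducibleTridiagonal (LinearMap.toMatrix b b A)) (θ : K) :
    Module.finrank K (A.eigenspace θ) ≤ 1 := by
  rcases Nat.eq_zero_or_pos n with rfl | hn
  · have := Module.Finite.of_basis b
    exact (Submodule.finrank_le _).trans (by simp [Module.finrank_eq_card_basis b])
  let firstCoord : A.eigenspace θ →ₗ[K] K :=
    (LinearMap.proj ⟨0, hn⟩ ∘ₗ b.equivFun.toLinearMap) ∘ₗ (A.eigenspace θ).subtype
  have hinj : Function.Injective firstCoord := by
    rw [← LinearMap.ker_eq_bot, LinearMap.ker_eq_bot']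
    rintro ⟨v, hv⟩ hv0
    have hAv : A v = θ • v := Module.End.mem_eigenspace_iff.mp hv
    have hrepr : LinearMap.toMatrix b b A *ᵥ b.repr v = θ • b.repr v := by
      rw [LinearMap.toMatrix_mulVec_repr, hAv, map_smul, Finsupp.coe_smul]
    simpa using hA.eq_zero_of_mulVec_eq_smul hn hrepr hv0
  simpa using LinearMap.finrank_le_finrank_of_injective hinj

theorem apply_basis_eq_smul_of_isDiag {ι : Type*} [Fintype ι] [DecidableEq ι]
    (c : Module.Basis ι K V) {A : Module.End K V} (hA : (LinearMap.toMatrix c c A).IsDiag)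
    (i : ι) : A (c i) = LinearMap.toMatrix c c A i i • c i := by
  conv_lhs => rw [← Matrix.toLin_toMatrix c c A, Matrix.toLin_self]
  exact Finset.sum_eq_single i (fun j _ hj => by rw [hA hj, zero_smul])
    (fun h => absurd (Finset.mem_univ i) h)

theorem injective_of_eigenbasis_of_finrank_eigenspace_le_one {ι : Type*} [Fintype ι] (c : Module.Basis ι K V) {A : Module.End K V} {θ : ι → K}
    (hc : ∀ i, A (c i) = θ i • c i) (hA : ∀ μ, Module.finrank K (A.eigenspace μ) ≤ 1) :
    Function.Injective θ := by
  classical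
  have := Module.Finite.of_basis c
  intro i j hij
  let e : {k // θ k = θ i} → A.eigenspace (θ i) :=
    fun k => ⟨c k, Module.End.mem_eigenspace_iff.mpr (by rw [hc k, k.2])⟩
  have he : LinearIndependent K e :=
    LinearIndependent.of_comp (A.eigenspace (θ i)).subtype
      (c.linearIndependent.comp Subtype.val Subtype.val_injective)
  have hcard := he.fintype_card_le_finrank.trans (hA (θ i))
  exact congrArg Subtype.val
    (Fintype.card_le_one_iff.mp hcard ⟨j, hij.symm⟩ ⟨i, rfl⟩).symm

end

theorem stmt_3_general {K V : Type*} [Field K] [AddCommGroup V] [Module K V]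
    (A B : Module.End K V) (h : IsLeonardPair A B) :
    ∃ θ : Fin (Module.finrank K V) → K, Function.Injective θ ∧
      ∀ i, Module.End.HasEigenvalue A (θ i) := by
  obtain ⟨n, b, c, hAb, -, -, hAc⟩ := h
  obtain rfl : Module.finrank K V = n := by
    rw [Module.finrank_eq_card_basis c, Fintype.card_fin]
  have hc := apply_basis_eq_smul_of_isDiag c hAc
  refine ⟨fun i => LinearMap.toMatrix c c A i i,
    injective_of_eigenbasis_of_finrank_eigenspace_le_one c hc
      (finrank_eigenspace_le_one_of_isIrreducibleTridiagonal b hAb), fun i => ?_⟩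
  exact Module.End.hasEigenvalue_of_hasEigenvector
    ⟨Module.End.mem_eigenspace_iff.mpr (hc i), c.ne_zero i⟩

theorem stmt_3 {K V : Type*} [Field K] [AddCommGroup V] [Module K V]
    [FiniteDimensional K V] (hV : 0 < Module.finrank K V)
    (A B : Module.End K V) (h : IsLeonardPair A B) :
    ∃ θ : Fin (Module.finrank K V) → K, Function.Injective θ ∧
      ∀ i, Module.End.HasEigenvalue A (θ i) :=
  stmt_3_general A B h
end

section
/- Let (A, A*) be a Leonard pair with E*_i and θ*_i as above. Then for 0 ≤ i, j ≤ d and 0 ≤ r, s ≤ d: E*_i A^r A* A^s E*_j = θ*_{j+s} · E*_i A^{r+s} E*_j if i − j = r + s; E*_i A^r A* A^s E*_j = θ*_{j−s} · E*_i A^{r+s} E*_j if j − i = r + s; and E*_i A^r A* A^s E*_j = 0 if |i−j| > r + s. -/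
namespace Matrix

variable {R : Type*} {n : ℕ}

def HasBandwidth [Zero R] (M : Matrix (Fin n) (Fin n) R) (w : ℕ) : Prop :=
  ∀ i j : Fin n, w < Nat.dist i j → M i j = 0

theorem IsDiag.hasBandwidth_zero [Zero R] {D : Matrix (Fin n) (Fin n) R} (hD : D.IsDiag) :
    D.HasBandwidth 0 := fun i j h ↦
  hD fun hij ↦ by simp [hij, Nat.dist_self] at h

theorem one_hasBandwidth_zero [Zero R] [One R] : (1 : Matrix (Fin n) (Fin n) R).HasBandwidth 0 :=
  IsDiag.hasBandwidth_zero isDiag_one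

theorem HasBandwidth.mul [NonUnitalNonAssocSemiring R] {M N : Matrix (Fin n) (Fin n) R}
    {p q : ℕ} (hM : M.HasBandwidth p) (hN : N.HasBandwidth q) :
    (M * N).HasBandwidth (p + q) := by
  intro i j h
  rw [mul_apply]
  refine Finset.sum_eq_zero fun k _ ↦ ?_
  by_cases hik : p < Nat.dist i k
  · rw [hM i k hik, zero_mul]
  · have := Nat.dist.triangle_inequality i k j
    rw [hN k j (by omega), mul_zero]

theorem HasBandwidth.pow [Semiring R] {M : Matrix (Fin n) (Fin n) R} {p : ℕ}
    (hM : M.HasBandwidth p) (r : ℕ) : (M ^ r).HasBandwidth (p * r) := by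
  induction r with
  | zero => simpa using one_hasBandwidth_zero
  | succ r ih => simpa [pow_succ, Nat.mul_succ] using ih.mul hM

theorem mul_mul_apply_of_isDiag [CommSemiring R] {ι : Type*} [Fintype ι] [DecidableEq ι]
    {P D Q : Matrix ι ι R} (hD : D.IsDiag) {i j : ι} (k : ι)
    (hk : ∀ l, l ≠ k → P i l * Q l j = 0) :
    (P * D * Q) i j = D k k * (P * Q) i j := by
  obtain ⟨d, rfl⟩ : ∃ d, D = diagonal d := ⟨_, hD.diagonal_diag.symm⟩
  rw [mul_apply, mul_apply]
  simp only [mul_diagonal, diagonal_apply_eq]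
  rw [Finset.sum_eq_single_of_mem k (Finset.mem_univ k) fun l _ hl ↦ by
      rw [mul_right_comm, hk l hl, zero_mul],
    Finset.sum_eq_single_of_mem k (Finset.mem_univ k) fun l _ hl ↦ hk l hl]
  ring

theorem HasBandwidth.mul_mul_apply_of_isDiag [CommSemiring R]
    {P D Q : Matrix (Fin n) (Fin n) R} {p q : ℕ} (hP : P.HasBandwidth p)
    (hQ : Q.HasBandwidth q) (hD : D.IsDiag) {i j : Fin n} (k : Fin n)
    (hk : ∀ l : Fin n, Nat.dist i l ≤ p → Nat.dist l j ≤ q → l = k) :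
    (P * D * Q) i j = D k k * (P * Q) i j := by
  refine Matrix.mul_mul_apply_of_isDiag hD k fun l hl ↦ ?_
  by_cases hil : Nat.dist i l ≤ p
  · rw [hQ l j (not_le.mp fun hlj ↦ hl (hk l hil hlj)), mul_zero]
  · rw [hP i l (not_le.mp hil), zero_mul]

end Matrix

theorem IsIrreducibleTridiagonal.hasBandwidth_one {K : Type*} [Field K] {n : ℕ}
    {M : Matrix (Fin n) (Fin n) K} (hM : IsIrreducibleTridiagonal M) : M.HasBandwidth 1 :=
  fun i j h ↦ hM.1 i j (by unfold Nat.dist at h; omega)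

theorem Matrix.toLin_single_mul_mul_toLin_single {R V ι : Type*} [CommRing R] [AddCommGroup V]
    [Module R V] [Fintype ι] [DecidableEq ι] (b : Module.Basis ι R V) (i j : ι)
    (X : Module.End R V) :
    toLin b b (single i i 1) * X * toLin b b (single j j 1) =
      LinearMap.toMatrix b b X i j • toLin b b (single i j 1) := by
  apply (LinearMap.toMatrix b b).injective
  simp [LinearMap.toMatrix_mul, smul_single]

theorem stmt_9 {K V : Type*} [Field K] [AddCommGroup V] [Module K V]
    (d : ℕ) (A B : Module.End K V)
    (b : Module.Basis (Fin (d + 1)) K V)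
    (hA : IsIrreducibleTridiagonal (LinearMap.toMatrix b b A))
    (hB : (LinearMap.toMatrix b b B).IsDiag)
    (E : Fin (d + 1) → Module.End K V)
    (hE : ∀ i, E i = Matrix.toLin b b (Matrix.single i i 1))
    (θs : Fin (d + 1) → K)
    (hθs : ∀ i, θs i = LinearMap.toMatrix b b B i i) :
    ∀ (i j : Fin (d + 1)) (r s : ℕ), r ≤ d → s ≤ d →
      (∀ h : (i : ℕ) = (j : ℕ) + r + s,
        E i * A ^ r * B * A ^ s * E j =
          θs ⟨(j : ℕ) + s, by have := i.isLt; omega⟩ • (E i * A ^ (r + s) * E j)) ∧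
      (∀ h : (j : ℕ) = (i : ℕ) + r + s,
        E i * A ^ r * B * A ^ s * E j =
          θs ⟨(j : ℕ) - s, by have := j.isLt; omega⟩ • (E i * A ^ (r + s) * E j)) ∧
      (r + s < Nat.dist i j → E i * A ^ r * B * A ^ s * E j = 0) := by
  intro i j r s _ _
  set M := LinearMap.toMatrix b b A
  set D := LinearMap.toMatrix b b B
  have hAr : (M ^ r).HasBandwidth r := by simpa using hA.hasBandwidth_one.pow r
  have hAs : (M ^ s).HasBandwidth s := by simpa using hA.hasBandwidth_one.pow s
  have of_entry : ∀ c : K, (M ^ r * D * M ^ s) i j = c * (M ^ (r + s)) i j →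
      E i * A ^ r * B * A ^ s * E j = c • (E i * A ^ (r + s) * E j) := by
    intro c hc
    rw [show E i * A ^ r * B * A ^ s = E i * (A ^ r * B * A ^ s) by simp only [mul_assoc]]
    simp only [hE, Matrix.toLin_single_mul_mul_toLin_single, LinearMap.toMatrix_mul,
      ← LinearMap.toMatrix_pow, smul_smul]
    exact congrArg (· • _) hc
  have of_unique_path : ∀ k, (∀ l : Fin (d + 1), Nat.dist i l ≤ r → Nat.dist l j ≤ s →
      l = k) → E i * A ^ r * B * A ^ s * E j = θs k • (E i * A ^ (r + s) * E j) := fun k hk ↦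
    of_entry _ (by rw [hθs, hAr.mul_mul_apply_of_isDiag hAs hB k hk, pow_add])
  refine ⟨fun h ↦ of_unique_path _ fun l hil hlj ↦ ?_,
    fun h ↦ of_unique_path _ fun l hil hlj ↦ ?_, fun h ↦ ?_⟩
  · unfold Nat.dist at hil hlj
    exact Fin.ext (by dsimp only; omega)
  · unfold Nat.dist at hil hlj
    exact Fin.ext (by dsimp only; omega)
  · rw [of_entry 0, zero_smul]
    rw [((hAr.mul hB.hasBandwidth_zero).mul hAs) i j (by omega), zero_mul]
end

section
/- Let (A, A*) be a Leonard pair on a (d+1)-dimensional K-vector space with eigenvalues θ_0, ..., θ_d of A (ordered by the basis diagonalizing A in which A* is irreducible tridiagonal). Given β, γ, ϱ ∈ K, define P(x,y) = x² − βxy + y² − γ(x+y) − ϱ. Then [A, A²A* − β·AA*A + A*A² − γ·(AA* + A*A) − ϱ·A*] = 0 if and only if P(θ_{i−1}, θ_i) = 0 for 1 ≤ i ≤ d. -/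
open Module Matrix

theorem Matrix.eq_zero_of_mulVec_eq_zero_of_apply_zero {R : Type*} [Semiring R]
    [NoZeroDivisors R] {n : ℕ} {S : Matrix (Fin (n + 1)) (Fin (n + 1)) R}
    (hS₀ : ∀ i j : Fin (n + 1), (i : ℕ) + 1 < j → S i j = 0)
    (hS₁ : ∀ i : Fin n, S i.castSucc i.succ ≠ 0)
    {v : Fin (n + 1) → R} (hv : S *ᵥ v = 0) (hv₀ : v 0 = 0) : v = 0 := by
  suffices h : ∀ k : Fin (n + 1), ∀ j ≤ k, v j = 0 from funext fun j => h j j le_rfl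
  intro k
  induction k using Fin.induction with
  | zero => intro j hj; rwa [Fin.le_zero_iff.mp hj]
  | succ k ih =>
    have hrow := congrFun hv k.castSucc
    rw [mulVec, dotProduct, Finset.sum_eq_single k.succ] at hrow
    · have hk := (mul_eq_zero.mp hrow).resolve_left (hS₁ k)
      intro j hj
      rcases hj.lt_or_eq with h | rfl
      · exact ih j (Fin.le_castSucc_iff.mpr h)
      · exact hk
    · intro j _ hj
      rcases le_or_gt j k.castSucc with h | h
      · rw [ih j h, mul_zero]
      · have : k.succ < j := lt_of_le_of_ne (Fin.castSucc_lt_iff_succ_le.mp h) (Ne.symm hj)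
        rw [hS₀ _ _ (by simpa [Fin.lt_def] using this), zero_mul]
    · simp

theorem LinearMap.apply_eq_smul_of_toMatrix_eq_diagonal {R M ι : Type*} [CommSemiring R]
    [AddCommMonoid M] [Module R M] [Fintype ι] [DecidableEq ι] {c : Basis ι R M}
    {f : End R M} {θ : ι → R} (h : toMatrix c c f = diagonal θ) (j : ι) :
    f (c j) = θ j • c j := by
  rw [← Matrix.toLin_toMatrix c c f, h, toLin_self]
  simp [diagonal_apply]

theorem Matrix.diagonal_commutator_apply {n R : Type*} [Fintype n] [DecidableEq n] [CommRing R]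
    (θ : n → R) (N : Matrix n n R) (β γ ϱ : R) (i j : n) :
    (diagonal θ * (diagonal θ ^ 2 * N - β • (diagonal θ * N * diagonal θ) + N * diagonal θ ^ 2 -
        γ • (diagonal θ * N + N * diagonal θ) - ϱ • N) -
      (diagonal θ ^ 2 * N - β • (diagonal θ * N * diagonal θ) + N * diagonal θ ^ 2 -
        γ • (diagonal θ * N + N * diagonal θ) - ϱ • N) * diagonal θ) i j =
      (θ i - θ j) * (θ i ^ 2 - β * θ i * θ j + θ j ^ 2 - γ * (θ i + θ j) - ϱ) * N i j := by
  simp only [sq, diagonal_mul_diagonal, sub_apply, add_apply, smul_apply, diagonal_mul,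
    mul_diagonal, smul_eq_mul, mul_sub, sub_mul, mul_add, add_mul]
  ring

namespace IsIrreducibleTridiagonal

variable {K : Type*} [Field K]

theorem sub_smul_one {n : ℕ} {M : Matrix (Fin n) (Fin n) K} (hM : IsIrreducibleTridiagonal M)
    (μ : K) : IsIrreducibleTridiagonal (M - μ • 1) := by
  have hoff : ∀ i j : Fin n, ((i : ℕ) + 1 < j ∨ (j : ℕ) + 1 < i ∨ (i : ℕ) + 1 = j ∨
      (j : ℕ) + 1 = i) → (M - μ • 1) i j = M i j := by
    intro i j hij
    have hne : i ≠ j := by rintro rfl; omega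
    simp [one_apply_ne hne]
  exact ⟨fun i j h => by rw [hoff i j (by omega), hM.1 i j h],
    fun i j h => by rw [hoff i j (by omega)]; exact hM.2 i j h⟩

theorem forall_mul_eq_zero_iff {d : ℕ} {N : Matrix (Fin (d + 1)) (Fin (d + 1)) K}
    (hN : IsIrreducibleTridiagonal N) {f : Fin (d + 1) → Fin (d + 1) → K}
    (hf : ∀ i, f i i = 0) :
    (∀ i j, f i j * N i j = 0) ↔
      ∀ i : Fin d, f i.castSucc i.succ = 0 ∧ f i.succ i.castSucc = 0 := by
  have adjacent : ∀ i j : Fin (d + 1), (i : ℕ) + 1 = j →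
      ∃ k : Fin d, k.castSucc = i ∧ k.succ = j := by
    intro i j hij
    obtain ⟨k, rfl⟩ := Fin.exists_succ_eq.mpr (show j ≠ 0 by rintro rfl; simp at hij)
    exact ⟨k, Fin.ext (by simp at hij ⊢; omega), rfl⟩
  refine ⟨fun h i => ⟨(mul_eq_zero.mp (h _ _)).resolve_right (hN.2 _ _ (Or.inl rfl)),
    (mul_eq_zero.mp (h _ _)).resolve_right (hN.2 _ _ (Or.inr rfl))⟩, ?_⟩
  intro h i j
  rcases lt_trichotomy ((i : ℕ) + 1) j with hij | hij | hij
  · rw [hN.1 i j (Or.inl hij), mul_zero]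
  · obtain ⟨k, rfl, rfl⟩ := adjacent i j hij
    rw [(h k).1, zero_mul]
  rcases lt_trichotomy ((j : ℕ) + 1) i with hji | hji | hji
  · rw [hN.1 i j (Or.inr hji), mul_zero]
  · obtain ⟨k, rfl, rfl⟩ := adjacent j i hji
    rw [(h k).2, zero_mul]
  · rw [show i = j from Fin.ext (by omega), hf, zero_mul]

variable {V : Type*} [AddCommGroup V] [Module K V] {n : ℕ} {b : Basis (Fin (n + 1)) K V}
  {f : End K V}

theorem eq_zero_of_apply_eq_zero_of_repr_zero
    (hf : IsIrreducibleTridiagonal (LinearMap.toMatrix b b f)) {x : V} (hx : f x = 0)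
    (hx₀ : b.repr x 0 = 0) : x = 0 := by
  have h := Matrix.eq_zero_of_mulVec_eq_zero_of_apply_zero (fun i j h => hf.1 i j (Or.inl h))
    (fun i => hf.2 _ _ (Or.inl rfl))
    (by rw [LinearMap.toMatrix_mulVec_repr, hx, map_zero]; rfl) hx₀
  exact b.repr.map_eq_zero_iff.mp (Finsupp.coe_eq_zero.mp h)

theorem smul_eq_smul_of_apply_eq_zero
    (hf : IsIrreducibleTridiagonal (LinearMap.toMatrix b b f)) {x y : V} (hx : f x = 0)
    (hy : f y = 0) : b.repr x 0 • y = b.repr y 0 • x :=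
  sub_eq_zero.mp <| hf.eq_zero_of_apply_eq_zero_of_repr_zero (by simp [hx, hy])
    (by simp [mul_comm])

theorem injective_of_apply_eq_smul {A : End K V}
    (hA : IsIrreducibleTridiagonal (LinearMap.toMatrix b b A)) {ι : Type*} (c : Basis ι K V)
    {θ : ι → K} (hc : ∀ j, A (c j) = θ j • c j) :
    Function.Injective θ := by
  intro i j hij
  by_contra hne
  have hf : IsIrreducibleTridiagonal (LinearMap.toMatrix b b (A - θ i • 1)) := by
    simpa [LinearMap.toMatrix_one] using hA.sub_smul_one (θ i)
  have hi : (A - θ i • 1) (c i) = 0 := by simp [hc]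
  have hj : (A - θ i • 1) (c j) = 0 := by simp [hc, hij]
  -- the `c j`-coordinate of the relation says `b.repr (c i) 0 = 0`
  have hrel := congrArg (fun v => c.repr v j) (hf.smul_eq_smul_of_apply_eq_zero hi hj)
  simp only [map_smul, Basis.repr_self, Finsupp.smul_apply, Finsupp.single_eq_same,
    Finsupp.single_eq_of_ne' hne, smul_eq_mul, mul_one, mul_zero] at hrel
  exact c.ne_zero i (hf.eq_zero_of_apply_eq_zero_of_repr_zero hi hrel)

end IsIrreducibleTridiagonal

theorem stmt_11 {K V : Type*} [Field K] [AddCommGroup V] [Module K V]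
    (d : ℕ) (A B : Module.End K V)
    (c : Module.Basis (Fin (d + 1)) K V)
    (hAdiag : (LinearMap.toMatrix c c A).IsDiag)
    (hBtri : IsIrreducibleTridiagonal (LinearMap.toMatrix c c B))
    (hLP : ∃ b : Module.Basis (Fin (d + 1)) K V,
      IsIrreducibleTridiagonal (LinearMap.toMatrix b b A) ∧
      (LinearMap.toMatrix b b B).IsDiag)
    (θ : Fin (d + 1) → K) (hθ : ∀ i, θ i = LinearMap.toMatrix c c A i i)
    (β γ ϱ : K) (P : K → K → K)
    (hP : ∀ x y, P x y = x ^ 2 - β * x * y + y ^ 2 - γ * (x + y) - ϱ) :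
    (A * (A ^ 2 * B - β • (A * B * A) + B * A ^ 2 - γ • (A * B + B * A) - ϱ • B) =
      (A ^ 2 * B - β • (A * B * A) + B * A ^ 2 - γ • (A * B + B * A) - ϱ • B) * A) ↔
    (∀ i : ℕ, (h : i < d) →
      P (θ ⟨i, by omega⟩) (θ ⟨i + 1, by omega⟩) = 0) := by
  have hA : LinearMap.toMatrix c c A = diagonal θ := by
    rw [← hAdiag.diagonal_diag]; exact congrArg diagonal (funext fun i => (hθ i).symm)
  obtain ⟨b, hbA, -⟩ := hLP
  have hθ_inj := hbA.injective_of_apply_eq_smul c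
    (LinearMap.apply_eq_smul_of_toMatrix_eq_diagonal hA)
  rw [← (LinearMap.toMatrix c c).injective.eq_iff, ← sub_eq_zero]
  simp only [map_sub, map_add, map_smul, LinearMap.toMatrix_mul, ← LinearMap.toMatrix_pow, hA]
  rw [← Matrix.ext_iff]
  simp only [diagonal_commutator_apply, Matrix.zero_apply, ← hP]
  rw [hBtri.forall_mul_eq_zero_iff (fun i => by rw [sub_self, zero_mul]), Fin.forall_iff]
  have hP_symm : ∀ x y, P x y = P y x := fun x y => by rw [hP, hP]; ring
  have hadj : ∀ i : Fin d, θ i.castSucc ≠ θ i.succ := fun i =>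
    hθ_inj.ne i.castSucc_lt_succ.ne
  simp only [mul_eq_zero, sub_eq_zero, hadj, fun i => (hadj i).symm, false_or]
  exact forall₂_congr fun i _ => by rw [hP_symm (θ (Fin.succ _)), and_self]; rfl
end

section
/- Let (A, A*) be a Leonard pair on a (d+1)-dimensional K-vector space with d ≥ 3, A-eigenvalues θ_0, ..., θ_d and A*-eigenvalues θ*_0, ..., θ*_d (ordered as in the standard Leonard-pair setup), and suppose β, γ, γ*, ϱ, ϱ* ∈ K satisfy the tridiagonal relations. Then the expressions (θ_{i−2} − θ_{i+1})/(θ_{i−1} − θ_i) and (θ*_{i−2} − θ*_{i+1})/(θ*_{i−1} − θ*_i) are both equal to β + 1 for all 2 ≤ i ≤ d−1. -/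
/-- The tridiagonal relations for the pair `(A, B)` with parameters `β, γ, γ*, ϱ, ϱ*`. -/
def TridiagonalRelations {K V : Type*} [Field K] [AddCommGroup V] [Module K V]
    (A B : Module.End K V) (β γ γs ϱ ϱs : K) : Prop :=
  (A * (A ^ 2 * B - β • (A * B * A) + B * A ^ 2 - γ • (A * B + B * A) - ϱ • B) =
    (A ^ 2 * B - β • (A * B * A) + B * A ^ 2 - γ • (A * B + B * A) - ϱ • B) * A) ∧
  (B * (B ^ 2 * A - β • (B * A * B) + A * B ^ 2 - γs • (B * A + A * B) - ϱs • A) =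
    (B ^ 2 * A - β • (B * A * B) + A * B ^ 2 - γs • (B * A + A * B) - ϱs • A) * B)

/-! In an eigenbasis of `A`, the matrix `N` of `A*` is irreducible tridiagonal and the matrix of `A`
is diagonal, so `T = A*²A − βA*AA* + AA*² − γ*(A*A + AA*) − ϱ*A` vanishes above its second
superdiagonal, where its `(k, k+2)` entry is `N_{k,k+1} N_{k+1,k+2} (θ_k − βθ_{k+1} + θ_{k+2})`.
Comparing the `(i, i+3)` entries of `A*T = TA*` and cancelling the nonzero superdiagonal entries of
`N` gives `θ_i − βθ_{i+1} + θ_{i+2} = θ_{i+1} − βθ_{i+2} + θ_{i+3}`. The eigenvalues are distinct,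
because an eigenvector of an irreducible tridiagonal matrix is determined by its first coordinate.
Exchanging the roles of `A` and `A*` gives the statement for the `θ*_i`. -/

namespace Matrix

section Banded

variable {R : Type*} [Ring R] {n p q : ℕ}

def IsUpperBanded (p : ℕ) (X : Matrix (Fin n) (Fin n) R) : Prop :=
  ∀ k l : Fin n, (k : ℕ) + p < l → X k l = 0

theorem IsDiag.isUpperBanded_zero {M : Matrix (Fin n) (Fin n) R} (hM : M.IsDiag) :
    M.IsUpperBanded 0 :=
  fun _ _ h => hM (Fin.ne_of_lt h)

namespace IsUpperBanded

variable {X Y : Matrix (Fin n) (Fin n) R}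

theorem mono (hX : X.IsUpperBanded p) (hpq : p ≤ q) : X.IsUpperBanded q :=
  fun k l h => hX k l (by omega)

theorem add (hX : X.IsUpperBanded p) (hY : Y.IsUpperBanded p) : (X + Y).IsUpperBanded p :=
  fun k l h => by rw [add_apply, hX k l h, hY k l h, add_zero]

theorem sub (hX : X.IsUpperBanded p) (hY : Y.IsUpperBanded p) : (X - Y).IsUpperBanded p :=
  fun k l h => by rw [sub_apply, hX k l h, hY k l h, sub_zero]

theorem smul (hX : X.IsUpperBanded p) (a : R) : (a • X).IsUpperBanded p :=
  fun k l h => by rw [smul_apply, hX k l h, smul_zero]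

theorem mul (hX : X.IsUpperBanded p) (hY : Y.IsUpperBanded q) : (X * Y).IsUpperBanded (p + q) := by
  intro k j h
  rw [mul_apply]
  refine Finset.sum_eq_zero fun l _ => ?_
  rcases lt_or_ge ((k : ℕ) + p) l with hl | hl
  · rw [hX k l hl, zero_mul]
  · rw [hY l j (by omega), mul_zero]

theorem mul_apply_of_val_eq (hX : X.IsUpperBanded p) (hY : Y.IsUpperBanded q) {k l j : Fin n}
    (hl : (l : ℕ) = k + p) (hj : (j : ℕ) = l + q) : (X * Y) k j = X k l * Y l j := by
  rw [mul_apply]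
  refine Finset.sum_eq_single l (fun l' _ hne => ?_) (by simp)
  have hne : (l' : ℕ) ≠ l := Fin.val_ne_of_ne hne
  rcases lt_or_ge ((k : ℕ) + p) l' with hl' | hl'
  · rw [hX k l' hl', zero_mul]
  · rw [hY l' j (by omega), mul_zero]

end IsUpperBanded

end Banded

end Matrix

section TridiagonalTerm

variable {K R S : Type*} [CommRing K] [Ring R] [Ring S] [Algebra K R] [Algebra K S]

/-- The tridiagonal relations say that `X` commutes with `tridiagonalTerm β γ ϱ X Y`. -/
def tridiagonalTerm (β γ ϱ : K) (X Y : R) : R :=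
  X ^ 2 * Y - β • (X * Y * X) + Y * X ^ 2 - γ • (X * Y + Y * X) - ϱ • Y

theorem map_tridiagonalTerm {F : Type*} [FunLike F R S] [AlgHomClass F K R S] (f : F)
    (β γ ϱ : K) (X Y : R) :
    f (tridiagonalTerm β γ ϱ X Y) = tridiagonalTerm β γ ϱ (f X) (f Y) := by
  simp only [tridiagonalTerm, map_sub, map_add, map_smul, map_mul, map_pow]

end TridiagonalTerm

theorem tridiagonalRelations_iff {K V : Type*} [Field K] [AddCommGroup V] [Module K V]
    {A B : Module.End K V} {β γ γs ϱ ϱs : K} :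
    TridiagonalRelations A B β γ γs ϱ ϱs ↔
      Commute A (tridiagonalTerm β γ ϱ A B) ∧ Commute B (tridiagonalTerm β γs ϱs B A) :=
  Iff.rfl

namespace IsIrreducibleTridiagonal

variable {K : Type*} [Field K] {n : ℕ} {N M : Matrix (Fin n) (Fin n) K}

theorem isUpperBanded (hN : IsIrreducibleTridiagonal N) : N.IsUpperBanded 1 :=
  fun k l h => hN.1 k l (Or.inl h)

theorem apply_ne_zero_of_val_eq (hN : IsIrreducibleTridiagonal N) {k l : Fin n}
    (h : (l : ℕ) = k + 1) : N k l ≠ 0 :=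
  hN.2 k l (Or.inl h.symm)

theorem tridiagonalTerm_isUpperBanded (hN : IsIrreducibleTridiagonal N) (hM : M.IsDiag)
    (β γ ϱ : K) : (tridiagonalTerm β γ ϱ N M).IsUpperBanded 2 := by
  have hN := hN.isUpperBanded
  have hM := hM.isUpperBanded_zero
  unfold tridiagonalTerm
  rw [pow_two]
  refine ((((hN.mul hN).mul hM).sub ((hN.mul hM).mul hN |>.smul β)).add
    (hM.mul (hN.mul hN))).sub (((hN.mul hM).add (hM.mul hN) |>.mono ?_).smul γ)
    |>.sub ((hM.mono ?_).smul ϱ) <;> omega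

theorem tridiagonalTerm_apply_of_val_eq (hN : IsIrreducibleTridiagonal N) (hM : M.IsDiag)
    (β γ ϱ : K) {k l j : Fin n} (hl : (l : ℕ) = k + 1) (hj : (j : ℕ) = l + 1) :
    tridiagonalTerm β γ ϱ N M k j = N k l * N l j * (M k k - β * M l l + M j j) := by
  have hN := hN.isUpperBanded
  have hM := hM.isUpperBanded_zero
  have hkj : (k : ℕ) + 1 < j := by omega
  have hNN : (N * N) k j = N k l * N l j := hN.mul_apply_of_val_eq hN hl hj
  simp only [tridiagonalTerm, pow_two, Matrix.sub_apply, Matrix.add_apply, Matrix.smul_apply,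
    smul_eq_mul]
  rw [(hN.mul hN).mul_apply_of_val_eq hM (l := j) (by omega) rfl,
    (hN.mul hM).mul_apply_of_val_eq hN hl hj, hN.mul_apply_of_val_eq hM (l := l) hl rfl,
    hM.mul_apply_of_val_eq (hN.mul hN) (l := k) rfl (by omega), hNN,
    (hN.mul hM) k j hkj, (hM.mul hN) k j hkj, hM k j (by omega)]
  ring

theorem diag_recurrence_of_commute (hN : IsIrreducibleTridiagonal N) (hM : M.IsDiag)
    {β γ ϱ : K} (hcomm : Commute N (tridiagonalTerm β γ ϱ N M)) {i j₁ j₂ j₃ : Fin n}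
    (h₁ : (j₁ : ℕ) = i + 1) (h₂ : (j₂ : ℕ) = j₁ + 1) (h₃ : (j₃ : ℕ) = j₂ + 1) :
    M i i - M j₃ j₃ = (β + 1) * (M j₁ j₁ - M j₂ j₂) := by
  have hT := hN.tridiagonalTerm_isUpperBanded hM β γ ϱ
  have hentry := congrFun₂ hcomm.eq i j₃
  rw [hN.isUpperBanded.mul_apply_of_val_eq hT h₁ (by omega),
    hT.mul_apply_of_val_eq hN.isUpperBanded (by omega) h₃,
    hN.tridiagonalTerm_apply_of_val_eq hM β γ ϱ h₂ h₃,
    hN.tridiagonalTerm_apply_of_val_eq hM β γ ϱ h₁ h₂] at hentry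
  have hprod : N i j₁ * N j₁ j₂ * N j₂ j₃ ≠ 0 :=
    mul_ne_zero (mul_ne_zero (hN.apply_ne_zero_of_val_eq h₁) (hN.apply_ne_zero_of_val_eq h₂))
      (hN.apply_ne_zero_of_val_eq h₃)
  have hzero : N i j₁ * N j₁ j₂ * N j₂ j₃ *
      (M i i - M j₃ j₃ - (β + 1) * (M j₁ j₁ - M j₂ j₂)) = 0 := by
    linear_combination -hentry
  exact sub_eq_zero.mp ((mul_eq_zero.mp hzero).resolve_left hprod)

theorem eq_zero_of_mulVec_eq_smul_s15 {m : ℕ} {N : Matrix (Fin (m + 1)) (Fin (m + 1)) K}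
    (hN : IsIrreducibleTridiagonal N) {t : K} {x : Fin (m + 1) → K} (hx : N.mulVec x = t • x)
    (h0 : x 0 = 0) : x = 0 := by
  suffices h : ∀ k : ℕ, ∀ l : Fin (m + 1), (l : ℕ) ≤ k → x l = 0 from
    funext fun l => h l l le_rfl
  intro k
  induction k with
  | zero => exact fun l hl => (Fin.ext (Nat.le_zero.mp hl) : l = 0) ▸ h0
  | succ k ih =>
    intro l hl
    rcases Nat.lt_or_ge k l with hkl | hkl
    · let k' : Fin (m + 1) := ⟨k, by omega⟩
      have hrow : N k' l * x l = t * x k' := by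
        have hk' := congrFun hx k'
        rw [Pi.smul_apply, smul_eq_mul, Matrix.mulVec, dotProduct] at hk'
        rwa [Finset.sum_eq_single l ?_ (by simp)] at hk'
        intro l' _ hne
        rcases Nat.lt_or_ge (k + 1) l' with h | h
        · rw [hN.1 k' l' (Or.inl h), zero_mul]
        · rw [ih l' (by have := Fin.val_ne_of_ne hne; omega), mul_zero]
      rw [ih k' le_rfl, mul_zero] at hrow
      exact (mul_eq_zero.mp hrow).resolve_left (hN.apply_ne_zero_of_val_eq (by simp [k']; omega))
    · exact ih l hkl

end IsIrreducibleTridiagonal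

namespace Module.End

open LinearMap

variable {K V : Type*} [Field K] [AddCommGroup V] [Module K V] {A B : Module.End K V}

theorem apply_basis_eq_smul_of_isDiag {ι : Type*} [Fintype ι] [DecidableEq ι]
    (c : Basis ι K V) (hA : (toMatrix c c A).IsDiag) (k : ι) :
    A (c k) = toMatrix c c A k k • c k := by
  conv_lhs => rw [← Matrix.toLin_toMatrix c c A]
  rw [Matrix.toLin_self]
  exact Finset.sum_eq_single k (fun l _ hl => by rw [hA hl, zero_smul]) (by simp)

variable {m : ℕ}

theorem eq_zero_of_apply_eq_smul_of_repr_zero (b : Basis (Fin (m + 1)) K V)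
    (hA : IsIrreducibleTridiagonal (toMatrix b b A)) {t : K} {v : V} (hv : A v = t • v)
    (h0 : b.repr v 0 = 0) : v = 0 := by
  have hx : (toMatrix b b A).mulVec (b.repr v) = t • b.repr v := by
    rw [toMatrix_mulVec_repr, hv, map_smul, Finsupp.coe_smul]
  exact b.repr.map_eq_zero_iff.mp (Finsupp.coe_eq_zero.mp (hA.eq_zero_of_mulVec_eq_smul_s15 hx h0))

theorem toMatrix_diag_injective (b c : Basis (Fin (m + 1)) K V)
    (hAb : IsIrreducibleTridiagonal (toMatrix b b A)) (hAc : (toMatrix c c A).IsDiag) :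
    Function.Injective (toMatrix c c A).diag := by
  intro i j hij
  by_contra hne
  have hi := apply_basis_eq_smul_of_isDiag c hAc i
  have hj : A (c j) = toMatrix c c A i i • c j :=
    (apply_basis_eq_smul_of_isDiag c hAc j).trans (congrArg (· • c j) hij.symm)
  have hcomb : b.repr (c j) 0 • c i - b.repr (c i) 0 • c j = 0 := by
    refine eq_zero_of_apply_eq_smul_of_repr_zero b hAb (t := toMatrix c c A i i) ?_
      (by simp [mul_comm])
    rw [map_sub, map_smul, map_smul, hi, hj]
    module
  have hj0 : b.repr (c j) 0 = 0 := by
    simpa [Finsupp.single_apply, hne] using congrArg (fun v => c.repr v i) hcomb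
  exact c.ne_zero j (eq_zero_of_apply_eq_smul_of_repr_zero b hAb hj hj0)

theorem toMatrix_diag_ratio_eq (b c : Basis (Fin (m + 1)) K V)
    (hAb : IsIrreducibleTridiagonal (toMatrix b b A)) (hAc : (toMatrix c c A).IsDiag)
    (hBc : IsIrreducibleTridiagonal (toMatrix c c B)) {β γ ϱ : K}
    (hcomm : Commute B (tridiagonalTerm β γ ϱ B A)) {i j₁ j₂ j₃ : Fin (m + 1)}
    (h₁ : (j₁ : ℕ) = i + 1) (h₂ : (j₂ : ℕ) = j₁ + 1) (h₃ : (j₃ : ℕ) = j₂ + 1) :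
    (toMatrix c c A i i - toMatrix c c A j₃ j₃) / (toMatrix c c A j₁ j₁ - toMatrix c c A j₂ j₂) =
      β + 1 := by
  have hcomm' := hcomm.map (toMatrixAlgEquiv c)
  rw [map_tridiagonalTerm] at hcomm'
  have hne : toMatrix c c A j₁ j₁ - toMatrix c c A j₂ j₂ ≠ 0 :=
    sub_ne_zero.mpr fun h => (Fin.ne_of_lt (by omega : j₁ < j₂))
      (toMatrix_diag_injective b c hAb hAc h)
  rw [div_eq_iff hne]
  exact hBc.diag_recurrence_of_commute hAc hcomm' h₁ h₂ h₃

end Module.End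

theorem stmt_15 {K V : Type*} [Field K] [AddCommGroup V] [Module K V]
    (d : ℕ) (A B : Module.End K V)
    (b : Module.Basis (Fin (d + 1)) K V)
    (hAtri : IsIrreducibleTridiagonal (LinearMap.toMatrix b b A))
    (hBdiag : (LinearMap.toMatrix b b B).IsDiag)
    (c : Module.Basis (Fin (d + 1)) K V)
    (hBtri : IsIrreducibleTridiagonal (LinearMap.toMatrix c c B))
    (hAdiag : (LinearMap.toMatrix c c A).IsDiag)
    (θ : Fin (d + 1) → K) (hθ : ∀ i, θ i = LinearMap.toMatrix c c A i i)
    (θs : Fin (d + 1) → K) (hθs : ∀ i, θs i = LinearMap.toMatrix b b B i i)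
    (β γ γs ϱ ϱs : K)
    (hrel : TridiagonalRelations A B β γ γs ϱ ϱs) :
    ∀ i : ℕ, (h1 : 2 ≤ i) → (h2 : i + 1 ≤ d) →
      (θ ⟨i - 2, by omega⟩ - θ ⟨i + 1, by omega⟩) /
        (θ ⟨i - 1, by omega⟩ - θ ⟨i, by omega⟩) = β + 1 ∧
      (θs ⟨i - 2, by omega⟩ - θs ⟨i + 1, by omega⟩) /
        (θs ⟨i - 1, by omega⟩ - θs ⟨i, by omega⟩) = β + 1 := by
  intro i h1 h2
  obtain ⟨hAB, hBA⟩ := tridiagonalRelations_iff.mp hrel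
  have h₁ : i - 1 = i - 2 + 1 := by omega
  have h₂ : i = i - 1 + 1 := by omega
  simp only [hθ, hθs]
  exact ⟨Module.End.toMatrix_diag_ratio_eq b c hAtri hAdiag hBtri hBA h₁ h₂ rfl,
    Module.End.toMatrix_diag_ratio_eq c b hBtri hBdiag hAtri hAB h₁ h₂ rfl⟩
end

section
/- If (A, A*) is a Leonard pair on a vector space V of dimension at least 2, then A·A* ≠ A*·A. -/
/-! In the basis where `A` is irreducible tridiagonal and `B` diagonal, `AB = BA` forces equal
diagonal entries of `B` at the two ends of every nonzero superdiagonal entry of `A`; along the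
chain these entries link all of them, so `B` is a scalar. A scalar is diagonal in every basis,
so it cannot be irreducible tridiagonal in the other basis once `dim V ≥ 2`. -/

/-- `(M D - D M) i j = M i j * (d j - d i)` for `D = diagonal d`. -/
theorem Matrix.apply_eq_of_commute_diagonal {ι R : Type*} [Fintype ι] [DecidableEq ι]
    [CommRing R] [NoZeroDivisors R] {M : Matrix ι ι R} {d : ι → R}
    (hMd : Commute M (Matrix.diagonal d)) {i j : ι} (hij : M i j ≠ 0) : d i = d j := by
  have hMd_ij : M i j * d j = d i * M i j := by
    simpa only [Matrix.mul_diagonal, Matrix.diagonal_mul] using congrFun (congrFun hMd.eq i) j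
  exact (mul_left_cancel₀ hij (hMd_ij.trans (mul_comm _ _))).symm

theorem IsIrreducibleTridiagonal.eq_scalar_of_commute_diagonal {K : Type*} [Field K] {n : ℕ}
    {M : Matrix (Fin n) (Fin n) K} (hM : IsIrreducibleTridiagonal M) {d : Fin n → K}
    (hMd : Commute M (Matrix.diagonal d)) :
    ∃ a : K, Matrix.diagonal d = Matrix.scalar (Fin n) a := by
  cases n with
  | zero => exact ⟨0, Subsingleton.elim _ _⟩
  | succ n =>
    have hd_const (i : Fin (n + 1)) : d i = d 0 := by
      induction i using Fin.induction with
      | zero => rfl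
      | succ i ih =>
        rw [← ih]
        exact (Matrix.apply_eq_of_commute_diagonal hMd (hM.2 _ _ (Or.inl (by simp)))).symm
    exact ⟨d 0, by rw [Matrix.scalar_apply, funext hd_const]⟩

theorem IsIrreducibleTridiagonal.not_isDiag {K : Type*} [Field K] {n : ℕ}
    {M : Matrix (Fin n) (Fin n) K} (hM : IsIrreducibleTridiagonal M) (hn : 2 ≤ n) :
    ¬ M.IsDiag := fun hdiag =>
  hM.2 ⟨0, by omega⟩ ⟨1, hn⟩ (Or.inl rfl) (hdiag (by simp [Fin.ext_iff]))

theorem stmt_18_general {K V : Type*} [Field K] [AddCommGroup V] [Module K V]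
    (hV : 2 ≤ Module.finrank K V)
    (A B : Module.End K V) (hLP : IsLeonardPair A B) :
    A * B ≠ B * A := by
  intro hAB
  obtain ⟨n, b, c, hAtri, hBdiag, hBtri, -⟩ := hLP
  have hn : 2 ≤ n := by rwa [Module.finrank_eq_card_basis b, Fintype.card_fin] at hV
  have hcomm : Commute (LinearMap.toMatrix b b A) (LinearMap.toMatrix b b B) := by
    simp only [Commute, SemiconjBy, ← LinearMap.toMatrix_mul, hAB]
  rw [← hBdiag.diagonal_diag] at hcomm
  obtain ⟨a, ha⟩ := hAtri.eq_scalar_of_commute_diagonal hcomm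
  have hB : B = algebraMap K (Module.End K V) a := (LinearMap.toMatrix b b).injective <| by
    rw [← hBdiag.diagonal_diag, ha, LinearMap.toMatrix_algebraMap]
  refine hBtri.not_isDiag hn ?_
  rw [hB, LinearMap.toMatrix_algebraMap, Matrix.scalar_apply]
  exact Matrix.isDiag_diagonal _

theorem stmt_18 {K V : Type*} [Field K] [AddCommGroup V] [Module K V]
    [FiniteDimensional K V] (hV : 2 ≤ Module.finrank K V)
    (A B : Module.End K V) (hLP : IsLeonardPair A B) :
    A * B ≠ B * A :=
  stmt_18_general hV A B hLP
end

section
/- Let d be a nonnegative integer, V = C^{d+1}, A the (d+1)×(d+1) matrix diag(0, 1, ..., d), and A* the tridiagonal matrix with entries (A*)_{x,x+1} = p(d−x), (A*)_{x,x} = −p(d−x) − (1−p)x, (A*)_{x,x−1} = (1−p)x for 0 ≤ x ≤ d (the Krawtchouk difference operator), where p is a nonzero complex number with p ≠ 1. Then A²A* − 2·AA*A + A*A² − A* = (1−2p)·A + pd·I and A*²A − 2·A*AA* + AA*² − A = (1−2p)·A* − pd·I. -/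
open Finset

noncomputable def bb (p : ℂ) (d x y : ℕ) : ℂ :=
  if y = x + 1 then p * ((d : ℂ) - (x : ℂ))
  else if y = x then -(p * ((d : ℂ) - (x : ℂ))) - (1 - p) * (x : ℂ)
  else if x = y + 1 then (1 - p) * (x : ℂ)
  else 0

lemma bb_top (p : ℂ) (d x : ℕ) (hx : x ≤ d) : bb p d x (d + 1) = 0 := by
  unfold bb
  split_ifs with h1 h2 h3
  · have hxd : x = d := by omega
    subst hxd; ring
  · omega
  · omega
  · rfl

lemma bb_sum (p : ℂ) (d x y : ℕ) (hx : x ≤ d) :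
    (∑ z ∈ Finset.range (d + 2),
        bb p d x z * (bb p d z y * ((x : ℂ) + (y : ℂ) - 2 * (z : ℂ))))
      = (1 - 2 * p) * bb p d x y + (if x = y then (x : ℂ) - p * (d : ℂ) else 0) := by
  set F : ℕ → ℂ := fun z => bb p d z y * ((x : ℂ) + (y : ℂ) - 2 * (z : ℂ)) with hF
  have claim : ∀ z, bb p d x z * F z =
      (if z = x + 1 then (p * ((d : ℂ) - (x : ℂ))) * F z else 0) +
      ((if z = x then (-(p * ((d : ℂ) - (x : ℂ))) - (1 - p) * (x : ℂ)) * F z else 0) +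
       (if z + 1 = x then ((1 - p) * (x : ℂ)) * F z else 0)) := by
    intro z
    unfold bb
    split_ifs <;> first | ring1 | (exfalso; omega)
  rw [Finset.sum_congr rfl fun z _ => claim z]
  rw [Finset.sum_add_distrib, Finset.sum_add_distrib, Finset.sum_ite_eq', Finset.sum_ite_eq']
  rw [if_pos (show x + 1 ∈ Finset.range (d + 2) by simp; omega),
      if_pos (show x ∈ Finset.range (d + 2) by simp; omega)]
  rcases x with _ | m
  · simp only [Nat.add_eq_zero, one_ne_zero, and_false, if_false, Finset.sum_const_zero]
    simp only [hF]
    unfold bb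
    split_ifs <;> first | (exfalso; omega) | (subst_vars; push_cast; ring1)
  · have hcond : ∀ z : ℕ, (z + 1 = m + 1) = (z = m) := by intro z; simp
    simp only [hcond]
    rw [Finset.sum_ite_eq', if_pos (show m ∈ Finset.range (d + 2) by simp; omega)]
    simp only [hF]
    unfold bb
    split_ifs <;> first | (exfalso; omega) | (subst_vars; push_cast; ring1)

theorem stmt_19 (d : ℕ) (p : ℂ) (hp0 : p ≠ 0) (hp1 : p ≠ 1)
    (A B : Matrix (Fin (d + 1)) (Fin (d + 1)) ℂ)
    (hA : A = Matrix.diagonal (fun x : Fin (d + 1) => ((x : ℕ) : ℂ)))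
    (hB : ∀ x y : Fin (d + 1), B x y =
      if (y : ℕ) = (x : ℕ) + 1 then p * ((d : ℂ) - ((x : ℕ) : ℂ))
      else if (y : ℕ) = (x : ℕ) then
        -(p * ((d : ℂ) - ((x : ℕ) : ℂ))) - (1 - p) * ((x : ℕ) : ℂ)
      else if (x : ℕ) = (y : ℕ) + 1 then (1 - p) * ((x : ℕ) : ℂ)
      else 0) :
    A ^ 2 * B - (2 : ℂ) • (A * B * A) + B * A ^ 2 - B =
      (1 - 2 * p) • A + (p * d) • (1 : Matrix (Fin (d + 1)) (Fin (d + 1)) ℂ) ∧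
    B ^ 2 * A - (2 : ℂ) • (B * A * B) + A * B ^ 2 - A =
      (1 - 2 * p) • B - (p * d) • (1 : Matrix (Fin (d + 1)) (Fin (d + 1)) ℂ) := by
  have hB' : ∀ x y : Fin (d + 1), B x y = bb p d x y := by
    intro x y; rw [hB]; rfl
  subst hA
  constructor
  · ext x y
    simp only [pow_two, Matrix.sub_apply, Matrix.add_apply, Matrix.smul_apply,
      Matrix.diagonal_mul_diagonal, Matrix.diagonal_mul, Matrix.mul_diagonal,
      Matrix.one_apply, Matrix.diagonal_apply, smul_eq_mul, hB', Fin.ext_iff]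
    rcases x with ⟨i, hi⟩
    rcases y with ⟨j, hj⟩
    simp only []
    unfold bb
    split_ifs <;> first | (exfalso; omega) | (subst_vars; push_cast; ring1)
  · ext x y
    simp only [pow_two, Matrix.sub_apply, Matrix.add_apply, Matrix.smul_apply, smul_eq_mul,
      Matrix.mul_diagonal, Matrix.diagonal_mul, Matrix.diagonal_apply, Matrix.one_apply]
    simp only [Matrix.mul_apply, Matrix.mul_diagonal, Matrix.diagonal_apply, mul_ite, mul_zero,
      Finset.sum_ite_eq', Finset.mem_univ, if_true, hB']
    have key : (∑ z : Fin (d + 1),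
          bb p d ↑x ↑z * (bb p d ↑z ↑y * (((x : ℕ) : ℂ) + ((y : ℕ) : ℂ) - 2 * ((z : ℕ) : ℂ))))
        = (1 - 2 * p) * bb p d ↑x ↑y
          + (if (x : ℕ) = (y : ℕ) then ((x : ℕ) : ℂ) - p * (d : ℂ) else 0) := by
      have e1 : (∑ z : Fin (d + 1),
            bb p d ↑x ↑z * (bb p d ↑z ↑y * (((x : ℕ) : ℂ) + ((y : ℕ) : ℂ) - 2 * ((z : ℕ) : ℂ))))
          = ∑ z ∈ Finset.range (d + 1),
            bb p d ↑x z * (bb p d z ↑y * (((x : ℕ) : ℂ) + ((y : ℕ) : ℂ) - 2 * (z : ℂ))) :=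
        Fin.sum_univ_eq_sum_range
          (fun z => bb p d ↑x z * (bb p d z ↑y * (((x : ℕ) : ℂ) + ((y : ℕ) : ℂ) - 2 * (z : ℂ)))) _
      have e2 := Finset.sum_range_succ
        (fun z => bb p d ↑x z * (bb p d z ↑y * (((x : ℕ) : ℂ) + ((y : ℕ) : ℂ) - 2 * (z : ℂ)))) (d + 1)
      rw [bb_top p d ↑x (Nat.lt_succ_iff.mp x.isLt)] at e2
      simp only [zero_mul, add_zero] at e2
      rw [e1, ← e2]
      exact bb_sum p d ↑x ↑y (Nat.lt_succ_iff.mp x.isLt)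
    calc ((∑ z : Fin (d + 1), bb p d ↑x ↑z * bb p d ↑z ↑y) * ((y : ℕ) : ℂ)
            - 2 * (∑ z : Fin (d + 1), bb p d ↑x ↑z * ((z : ℕ) : ℂ) * bb p d ↑z ↑y)
            + ((x : ℕ) : ℂ) * (∑ z : Fin (d + 1), bb p d ↑x ↑z * bb p d ↑z ↑y))
          - (if x = y then ((x : ℕ) : ℂ) else 0)
        = (∑ z : Fin (d + 1),
            bb p d ↑x ↑z * (bb p d ↑z ↑y * (((x : ℕ) : ℂ) + ((y : ℕ) : ℂ) - 2 * ((z : ℕ) : ℂ))))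
          - (if x = y then ((x : ℕ) : ℂ) else 0) := by
          congr 1
          rw [Finset.sum_mul, Finset.mul_sum, Finset.mul_sum, ← Finset.sum_sub_distrib,
            ← Finset.sum_add_distrib]
          exact Finset.sum_congr rfl fun z _ => by ring
      _ = (1 - 2 * p) * bb p d ↑x ↑y - (if x = y then p * ↑d * 1 else 0) := by
          rw [key]
          rcases eq_or_ne x y with h | h
          · subst h
            simp
            ring
          · rw [if_neg h, if_neg h, if_neg (fun hc => h (Fin.ext hc))]
            ring
end
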